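/- arXiv:1212.4638 — 3 statements merged into one kernel-verified Lean document; each statement's English description precedes it below -/
import Mathlib

section
/- For any odd integer i ≥ 3, the polynomial x + y does not divide φ_i(x,y,z) = (x^i + y^i + z^i + (x+y+z)^i)/((x+y)(x+z)(y+z)) in F_2[x,y,z]. -/
open MvPolynomial

/-- For odd `i ≥ 3`, the polynomial `x + y` does not divide
`φ_i = (x^i+y^i+z^i+(x+y+z)^i)/((x+y)(x+z)(y+z))` in `F₂[x,y,z]`. -/
theorem stmt_7 (i : ℕ) (hi : Odd i) (h3 : 3 ≤ i)
    (φ : MvPolynomial (Fin 3) (ZMod 2))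
    (hφ : (X 0 + X 1) * (X 0 + X 2) * (X 1 + X 2) * φ
        = X 0 ^ i + X 1 ^ i + X 2 ^ i + (X 0 + X 1 + X 2) ^ i) :
    ¬ (X 0 + X 1 : MvPolynomial (Fin 3) (ZMod 2)) ∣ φ := by
  rintro ⟨ψ, rfl⟩
  have key : ((X 0 + X 1)^2 * ((X 0 + X 2) * ((X 1 + X 2) * ψ))
      : MvPolynomial (Fin 3) (ZMod 2))
      = X 0 ^ i + X 1 ^ i + X 2 ^ i + (X 0 + X 1 + X 2) ^ i := by
    rw [← hφ]; ring
  have h2 : ((2 : MvPolynomial (Fin 3) (ZMod 2))) = 0 := by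
    have := CharP.cast_eq_zero (MvPolynomial (Fin 3) (ZMod 2)) 2
    simpa using this
  have hcast : ((i : MvPolynomial (Fin 3) (ZMod 2))) = 1 := by
    obtain ⟨k, rfl⟩ := hi
    push_cast
    rw [h2]
    ring
  have hD := congrArg (pderiv (1 : Fin 3)) key
  rw [pderiv_mul, pderiv_pow] at hD
  simp only [map_add, pderiv_pow, hcast, h2, pderiv_X, Pi.single_apply,
    show ((0:Fin 3) = 1) ↔ False from by simp, show ((2:Fin 3) = 1) ↔ False from by simp,
    show ((1:Fin 3) = 1) ↔ True from by simp, if_true, if_false,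
    mul_zero, zero_mul, mul_one, one_mul, add_zero, zero_add] at hD
  -- hD : (X0+X1)^2 * (...) = X1^(i-1) + (X0+X1+X2)^(i-1)
  set σ : MvPolynomial (Fin 3) (ZMod 2) →ₐ[ZMod 2] MvPolynomial (Fin 3) (ZMod 2) :=
    aeval (fun j => if j = 1 then X 0 else X j) with hσ
  have hS := congrArg σ hD
  simp only [hσ, map_add, map_mul, map_pow, map_one, aeval_X,
    show ((0:Fin 3) = 1) ↔ False from by simp, show ((2:Fin 3) = 1) ↔ False from by simp,
    show ((1:Fin 3) = 1) ↔ True from by simp, if_true, if_false] at hS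
  have hz : (X 0 + X 0 : MvPolynomial (Fin 3) (ZMod 2)) = 0 := by
    rw [← two_mul, h2]; ring
  simp only [hz, show ((2:ℕ)-1) = 1 from rfl, pow_one, mul_zero, zero_mul, ne_eq,
    OfNat.ofNat_ne_zero, not_false_eq_true, zero_pow, zero_add, add_zero] at hS
  -- hS : 0 = X0^(i-1) + X2^(i-1)
  have hc := congrArg (coeff (Finsupp.single (0 : Fin 3) (i-1))) hS
  rw [coeff_zero, coeff_add, coeff_X_pow, coeff_X_pow, if_pos rfl, if_neg (by
    intro h
    have h0 : ((Finsupp.single (2 : Fin 3) (i-1)) 0 = (Finsupp.single (0 : Fin 3) (i-1)) 0) := by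
      rw [h]
    simp [Finsupp.single_apply] at h0
    omega)] at hc
  simp at hc
end

section
/- In F_2[x,y,z], let A = (x+y)(x+z)(y+z); then x^12 + y^12 + z^12 + (x+y+z)^12 = ((x+y)(x+z)(y+z))^4 = A^4. -/
open MvPolynomial

/-- In `F₂[x,y,z]`, `φ₁₂ = A³`, i.e. `x¹²+y¹²+z¹²+(x+y+z)¹² = ((x+y)(x+z)(y+z))⁴`. -/
theorem stmt_11 :
    (X 0 ^ 12 + X 1 ^ 12 + X 2 ^ 12 + (X 0 + X 1 + X 2) ^ 12 :
        MvPolynomial (Fin 3) (ZMod 2)) =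
      ((X 0 + X 1) * (X 0 + X 2) * (X 1 + X 2)) ^ 4 := by
  have h2 : (2 : MvPolynomial (Fin 3) (ZMod 2)) = 0 := by
    exact_mod_cast CharP.cast_eq_zero (MvPolynomial (Fin 3) (ZMod 2)) 2
  have h3 : (X 0 ^ 3 + X 1 ^ 3 + X 2 ^ 3 + (X 0 + X 1 + X 2) ^ 3 :
      MvPolynomial (Fin 3) (ZMod 2)) = (X 0 + X 1) * (X 0 + X 2) * (X 1 + X 2) := by
    linear_combination (X 0 ^ 3 + X 1 ^ 3 + X 2 ^ 3 + X 0 ^ 2 * X 1 + X 0 ^ 2 * X 2 +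
      X 1 ^ 2 * X 0 + X 1 ^ 2 * X 2 + X 2 ^ 2 * X 0 + X 2 ^ 2 * X 1 +
      2 * (X 0 * X 1 * X 2) : MvPolynomial (Fin 3) (ZMod 2)) * h2
  have frob : ∀ a b : MvPolynomial (Fin 3) (ZMod 2), (a + b) ^ 4 = a ^ 4 + b ^ 4 := by
    intro a b
    have h := add_pow_char (p := 2) a b
    calc (a + b) ^ 4 = ((a + b) ^ 2) ^ 2 := by ring
      _ = (a ^ 2 + b ^ 2) ^ 2 := by rw [h]
      _ = (a ^ 2) ^ 2 + (b ^ 2) ^ 2 := add_pow_char (p := 2) _ _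
      _ = a ^ 4 + b ^ 4 := by ring
  calc (X 0 ^ 12 + X 1 ^ 12 + X 2 ^ 12 + (X 0 + X 1 + X 2) ^ 12 :
        MvPolynomial (Fin 3) (ZMod 2))
      = (X 0 ^ 3) ^ 4 + (X 1 ^ 3) ^ 4 + (X 2 ^ 3) ^ 4 + ((X 0 + X 1 + X 2) ^ 3) ^ 4 := by
        ring
    _ = (X 0 ^ 3 + X 1 ^ 3 + X 2 ^ 3 + (X 0 + X 1 + X 2) ^ 3) ^ 4 := by
        rw [frob, frob, frob]
    _ = ((X 0 + X 1) * (X 0 + X 2) * (X 1 + X 2)) ^ 4 := by rw [h3]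
end

section
/- The polynomial φ_5 does not divide φ_15 in F_2[x,y,z], where φ_5 = s_1^2 + s_2 and φ_15 = (x^15+y^15+z^15+(x+y+z)^15)/((x+y)(x+z)(y+z)). -/
open MvPolynomial

lemma irred_q : Irreducible (Polynomial.X ^ 2 + Polynomial.X + 1 : Polynomial (ZMod 2)) := by
  have hd : (Polynomial.X ^ 2 + Polynomial.X + 1 : Polynomial (ZMod 2)).natDegree = 2 := by
    compute_degree!
  rw [Polynomial.irreducible_iff_roots_eq_zero_of_degree_le_three (by omega) (by omega),
    Multiset.eq_zero_iff_forall_notMem]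
  intro a ha
  rw [Polynomial.mem_roots (by intro h; rw [h] at hd; simp at hd)] at ha
  have := ha
  simp only [Polynomial.IsRoot, Polynomial.eval_add, Polynomial.eval_pow,
    Polynomial.eval_X, Polynomial.eval_one] at this
  clear ha hd
  revert this
  revert a
  decide

/-- `φ₅ = s₁² + s₂` does not divide `φ₁₅` in `F₂[x,y,z]`. -/
theorem stmt_15 (φ15 : MvPolynomial (Fin 3) (ZMod 2))
    (hφ15 : (X 0 + X 1) * (X 0 + X 2) * (X 1 + X 2) * φ15
        = X 0 ^ 15 + X 1 ^ 15 + X 2 ^ 15 + (X 0 + X 1 + X 2) ^ 15) :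
    ¬ ((X 0 + X 1 + X 2) ^ 2 + (X 0 * X 1 + X 0 * X 2 + X 1 * X 2) :
        MvPolynomial (Fin 3) (ZMod 2)) ∣ φ15 := by
  intro hdvd
  haveI : Fact (Irreducible (Polynomial.X ^ 2 + Polynomial.X + 1 : Polynomial (ZMod 2))) :=
    ⟨irred_q⟩
  set R := AdjoinRoot (Polynomial.X ^ 2 + Polynomial.X + 1 : Polynomial (ZMod 2))
  set ω : R := AdjoinRoot.root _ with hωdef
  have h2 : (2 : R) = 0 := by
    have h := map_natCast (algebraMap (ZMod 2) R) 2
    rw [show ((2 : ℕ) : ZMod 2) = 0 by decide, map_zero] at h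
    exact_mod_cast h.symm
  have hω : ω ^ 2 + ω + 1 = 0 := by
    have := AdjoinRoot.eval₂_root (Polynomial.X ^ 2 + Polynomial.X + 1 : Polynomial (ZMod 2))
    simpa using this
  have hω2 : ω ^ 2 = ω + 1 := by linear_combination hω - (ω + 1) * h2
  have hω3 : ω ^ 3 = 1 := by linear_combination ω * hω2 + hω - h2
  have hω15 : ω ^ 15 = 1 := by
    calc ω ^ 15 = (ω ^ 3) ^ 5 := by ring
    _ = 1 := by rw [hω3]; ring
  have hω30 : ω ^ 30 = 1 := by
    calc ω ^ 30 = (ω ^ 3) ^ 10 := by ring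
    _ = 1 := by rw [hω3]; ring
  let f : MvPolynomial (Fin 3) (ZMod 2) →ₐ[ZMod 2] R := aeval ![1, ω, ω ^ 2]
  have hf5 : f ((X 0 + X 1 + X 2) ^ 2 + (X 0 * X 1 + X 0 * X 2 + X 1 * X 2)) = 0 := by
    simp only [f, map_add, map_mul, map_pow, aeval_X]
    simp only [Matrix.cons_val_zero, Matrix.cons_val_one, Matrix.head_cons, Matrix.cons_val_two,
      Matrix.tail_cons]
    linear_combination (ω ^ 2 + 2 * ω + 1) * hω
  have hfprod : f ((X 0 + X 1) * (X 0 + X 2) * (X 1 + X 2)) = 1 := by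
    simp only [f, map_add, map_mul, map_pow, aeval_X]
    simp only [Matrix.cons_val_zero, Matrix.cons_val_one, Matrix.head_cons, Matrix.cons_val_two,
      Matrix.tail_cons]
    linear_combination (ω ^ 3 + ω ^ 2 + 1) * hω - h2
  have hfrhs : f (X 0 ^ 15 + X 1 ^ 15 + X 2 ^ 15 + (X 0 + X 1 + X 2) ^ 15) = 1 := by
    simp only [f, map_add, map_mul, map_pow, aeval_X]
    simp only [Matrix.cons_val_zero, Matrix.cons_val_one, Matrix.head_cons, Matrix.cons_val_two,
      Matrix.tail_cons]
    have h0 : (1 : R) + ω + ω ^ 2 = 0 := by linear_combination hω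
    rw [show (1 : R) ^ 15 = 1 by ring, show ((ω ^ 2) ^ 15 : R) = ω ^ 30 by ring, hω15, hω30]
    rw [show (1 : R) + ω + ω ^ 2 = 0 from h0]
    rw [show (0 : R) ^ 15 = 0 by ring]
    linear_combination h2
  have h15 : f φ15 = 1 := by
    have := congrArg f hφ15
    rw [map_mul, hfprod, hfrhs, one_mul] at this
    exact this
  obtain ⟨c, hc⟩ := hdvd
  have hz := congrArg f hc
  rw [map_mul, hf5, zero_mul, h15] at hz
  exact one_ne_zero hz
end
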